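/- (Carnot's Theorem.) Let h(p) = -p·log₂(p) - (1-p)·log₂(1-p) be the base-2 binary entropy, and let t₁, t₂ be reals with 0 < t₂ < t₁ < 1/2. Let Δ : ℝ → ℝ satisfy Δ(0) = 0, Δ continuous at 0, and h(t₁ - ε) + h(t₂ + Δ(ε)) = h(t₁) + h(t₂) for all ε in some neighborhood of 0. Then the efficiency (ε - Δ(ε))/ε tends, as ε → 0 through nonzero values, to 1 - T_stat(t₂)/T_stat(t₁), where T_stat(t) := 1/log₂((1-t)/t). That is, the fraction of the energy withdrawn from the hot bath that is extractable as free work by a logically reversible, energy-conserving process equals one minus the ratio of the cold to the hot statistical temperature. -/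

import Mathlib

open Filter Topology Real

/-- The base-2 binary entropy function. -/
noncomputable def binEnt (p : ℝ) : ℝ :=
  -(p * Real.logb 2 p) - (1 - p) * Real.logb 2 (1 - p)

/-- The statistical temperature of a heat bath with Hamming fraction `t`. -/
noncomputable def Tstat (t : ℝ) : ℝ := 1 / Real.logb 2 ((1 - t) / t)

/-!
Write `f (x - ε) - f x = -ε · F(ε)` and `g (y + Δ ε) - g y = Δ ε · G(ε)` with the difference
quotients `F, G`, which tend to the derivatives `f' x` and `g' y` (the second because `Δ ε → 0`).
Conservation of `f (x - ε) + g (y + Δ ε)` then forces `Δ ε / ε = F(ε) / G(ε) → f' x / g' y`.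
For the entropy the derivative at `t` is `log₂ ((1 - t) / t) = 1 / T_stat t`, so
`Δ ε / ε → T_stat t₂ / T_stat t₁` and the efficiency `1 - Δ ε / ε` tends to the Carnot value.
-/

section ImplicitRatio

variable {𝕜 : Type*} [NontriviallyNormedField 𝕜]

theorem HasDerivAt.tendsto_dslope {f : 𝕜 → 𝕜} {a x : 𝕜} (hf : HasDerivAt f a x) :
    Tendsto (dslope f x) (𝓝 x) (𝓝 a) := by
  simpa [dslope_same, hf.deriv] using (continuousAt_dslope_same.2 hf.differentiableAt).tendsto

theorem tendsto_div_of_sum_conserved {f g Δ : 𝕜 → 𝕜} {x y a b : 𝕜} (hf : HasDerivAt f a x)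
    (hg : HasDerivAt g b y) (hb : b ≠ 0) (hΔ : Tendsto Δ (𝓝 0) (𝓝 0))
    (h : ∀ᶠ ε in 𝓝 0, f (x - ε) + g (y + Δ ε) = f x + g y) :
    Tendsto (fun ε => Δ ε / ε) (𝓝[≠] 0) (𝓝 (a / b)) := by
  have hF : Tendsto (fun ε => dslope f x (x - ε)) (𝓝 0) (𝓝 a) :=
    hf.tendsto_dslope.comp (by simpa using (continuous_sub_left x).tendsto 0)
  have hG : Tendsto (fun ε => dslope g y (y + Δ ε)) (𝓝 0) (𝓝 b) :=
    hg.tendsto_dslope.comp (by simpa using (tendsto_const_nhds (x := y)).add hΔ)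
  have hconserve : ∀ᶠ ε in 𝓝 0, ε * dslope f x (x - ε) = Δ ε * dslope g y (y + Δ ε) := by
    filter_upwards [h] with ε hε
    have hfε := sub_smul_dslope f x (x - ε)
    have hgε := sub_smul_dslope g y (y + Δ ε)
    simp only [smul_eq_mul, sub_sub_cancel_left, add_sub_cancel_left] at hfε hgε
    linear_combination -hfε - hgε - hε
  refine ((hF.div hG hb).mono_left nhdsWithin_le_nhds).congr' ?_
  filter_upwards [nhdsWithin_le_nhds hconserve, nhdsWithin_le_nhds (hG.eventually_ne hb),
    self_mem_nhdsWithin] with ε hε hGε hε0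
  rw [Pi.div_apply, div_eq_div_iff hGε hε0]
  linear_combination hε

end ImplicitRatio

theorem binEnt_eq_binEntropy_div_log_two : binEnt = fun p => binEntropy p / log 2 := by
  funext p
  simp only [binEnt, binEntropy, logb, log_inv]
  ring

theorem hasDerivAt_binEnt {p : ℝ} (hp₀ : p ≠ 0) (hp₁ : p ≠ 1) :
    HasDerivAt binEnt (logb 2 ((1 - p) / p)) p := by
  rw [binEnt_eq_binEntropy_div_log_two, logb, log_div (sub_ne_zero.2 hp₁.symm) hp₀]
  exact (hasDerivAt_binEntropy hp₀ hp₁).div_const _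

theorem logb_one_sub_div_pos {t : ℝ} (ht₀ : 0 < t) (ht : t < 1 / 2) :
    0 < logb 2 ((1 - t) / t) :=
  logb_pos one_lt_two ((one_lt_div ht₀).2 (by linarith))

theorem Tstat_div_Tstat (s t : ℝ) :
    Tstat s / Tstat t = logb 2 ((1 - t) / t) / logb 2 ((1 - s) / s) := by
  rw [Tstat, Tstat, div_div_div_comm, one_div_one, one_div_div]

theorem carnot_theorem (t₁ t₂ : ℝ) (ht₂0 : 0 < t₂) (ht₂₁ : t₂ < t₁) (ht₁ : t₁ < 1 / 2)
    (Δ : ℝ → ℝ) (hΔ0 : Δ 0 = 0) (hΔc : ContinuousAt Δ 0)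
    (hrev : ∀ᶠ ε in nhds 0, binEnt (t₁ - ε) + binEnt (t₂ + Δ ε) = binEnt t₁ + binEnt t₂) :
    Tendsto (fun ε : ℝ => (ε - Δ ε) / ε) (nhdsWithin 0 {0}ᶜ)
      (nhds (1 - Tstat t₂ / Tstat t₁)) := by
  have ht₁0 : 0 < t₁ := ht₂0.trans ht₂₁
  have hratio := tendsto_div_of_sum_conserved
    (hasDerivAt_binEnt ht₁0.ne' (by linarith)) (hasDerivAt_binEnt ht₂0.ne' (by linarith))
    (logb_one_sub_div_pos ht₂0 (ht₂₁.trans ht₁)).ne' (by simpa [hΔ0] using hΔc.tendsto) hrev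
  rw [Tstat_div_Tstat]
  refine (tendsto_const_nhds.sub hratio).congr' ?_
  filter_upwards [self_mem_nhdsWithin] with ε (hε : ε ≠ 0)
  rw [sub_div, div_self hε]
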